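/- arXiv:0704.2879 — 2 statements merged into one kernel-verified Lean document; each statement's English description precedes it below -/
import Mathlib

section
/- Let D ⊂ ℝ² be a disk and H : ℝ² × S¹ → ℝ a Hamiltonian with H̃ = H + c chosen so that H̃ vanishes on ∂D × S¹. Then the helicity integral ℋ(H) = ∫₀^{2π} ∫_D H̃(p,q,t) dp dq dt satisfies 2ℋ(H) = ∫_{D×S¹} α ∧ dα, where α = p dq − H̃ dt is a primitive of the 2-form i_ξ μ for the Hamiltonian vector field ξ = (−H_q, H_p, 1) and μ = dp ∧ dq ∧ dt. -/
open MeasureTheory Real intervalIntegral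

open Set Filter Topology Bornology

lemma slope_zero_of_acc {s : Set ℝ} {g g' : ℝ → ℝ} {x : ℝ}
    (hg : HasDerivAt g (g' x) x) (hs : ∀ y ∈ s, g y = 0) (hx : x ∈ s)
    (hacc : (𝓝[s \ {x}] x).NeBot) : g' x = 0 := by
  have h1 : Tendsto (slope g x) (𝓝[s \ {x}] x) (𝓝 (g' x)) :=
    (hasDerivAt_iff_tendsto_slope.mp hg).mono_left
      (nhdsWithin_mono _ (fun y hy => hy.2))
  have h2 : Tendsto (slope g x) (𝓝[s \ {x}] x) (𝓝 0) := by
    refine tendsto_const_nhds.congr' ?_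
    filter_upwards [self_mem_nhdsWithin] with y hy
    simp [slope_def_field, hs y hy.1, hs x hx]
  exact tendsto_nhds_unique h1 h2

lemma ae_deriv_zero_on_closed {s : Set ℝ} (hs : IsClosed s) {g g' : ℝ → ℝ}
    (hg : ∀ p, HasDerivAt g (g' p) p) (h0 : ∀ y ∈ s, g y = 0) :
    ∀ᵐ x, x ∈ s → g' x = 0 := by
  obtain ⟨V, Dp, hVc, hDp, hsVD⟩ := exists_countable_union_perfect_of_isClosed hs
  rw [ae_iff]
  refine measure_mono_null ?_ (hVc.measure_zero _)
  intro x hx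
  simp only [mem_setOf_eq, Classical.not_imp] at hx
  obtain ⟨hxs, hgx⟩ := hx
  by_contra hxV
  have hxD : x ∈ Dp := by
    have := hsVD ▸ hxs
    rcases this with h | h
    · exact absurd h hxV
    · exact h
  have hacc : AccPt x (𝓟 Dp) := hDp.acc x hxD
  have heq : 𝓝[Dp \ {x}] x = 𝓝[≠] x ⊓ 𝓟 Dp := by
    rw [nhdsWithin, nhdsWithin, inf_assoc, inf_principal]
    congr 1
    rw [Set.diff_eq, Set.inter_comm]
  have hDs : Dp ⊆ s := hsVD ▸ Set.subset_union_right
  have hne : (𝓝[Dp \ {x}] x).NeBot := by rw [heq]; exact hacc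
  have : (𝓝[s \ {x}] x).NeBot :=
    hne.mono (nhdsWithin_mono _ (Set.diff_subset_diff_left hDs))
  exact hgx (slope_zero_of_acc (hg x) h0 hxs this)
open MeasureTheory Real Set Filter Topology Bornology

lemma component_eq_Ioo {U : Set ℝ} (hUopen : IsOpen U) (hUb : Bornology.IsBounded U)
    {x : ℝ} (hx : x ∈ U) :
    ∃ a b : ℝ, a < b ∧ connectedComponentIn U x = Ioo a b ∧ a ∉ U ∧ b ∉ U ∧
      a ∈ closure U ∧ b ∈ closure U := by
  set c := connectedComponentIn U x with hc
  have hxc : x ∈ c := mem_connectedComponentIn hx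
  have hcU : c ⊆ U := connectedComponentIn_subset U x
  have hco : IsOpen c := hUopen.connectedComponentIn
  have hcb : Bornology.IsBounded c := hUb.subset hcU
  have hbb : BddBelow c := hcb.bddBelow
  have hba : BddAbove c := hcb.bddAbove
  have hne : c.Nonempty := ⟨x, hxc⟩
  have hoc : OrdConnected c := isPreconnected_connectedComponentIn.ordConnected
  set a := sInf c with ha
  set b := sSup c with hb
  have hsub : c ⊆ Ioo a b := by
    intro y hy
    obtain ⟨ε, hε, hball⟩ := Metric.isOpen_iff.mp hco y hy
    have hmem1 : y - ε / 2 ∈ c := by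
      apply hball
      rw [Metric.mem_ball, Real.dist_eq, show y - ε / 2 - y = -(ε / 2) by ring, abs_neg,
        abs_of_pos (by linarith)]
      linarith
    have hmem2 : y + ε / 2 ∈ c := by
      apply hball
      rw [Metric.mem_ball, Real.dist_eq, show y + ε / 2 - y = ε / 2 by ring,
        abs_of_pos (by linarith)]
      linarith
    constructor
    · have := csInf_le hbb hmem1; linarith
    · have := le_csSup hba hmem2; linarith
  have hsup : Ioo a b ⊆ c := by
    intro y hy
    obtain ⟨z₁, hz₁, hz₁'⟩ := exists_lt_of_csInf_lt hne hy.1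
    obtain ⟨z₂, hz₂, hz₂'⟩ := exists_lt_of_lt_csSup hne hy.2
    exact hoc.out hz₁ hz₂ ⟨hz₁'.le, hz₂'.le⟩
  have hceq : c = Ioo a b := hsub.antisymm hsup
  have hab : a < b := lt_trans (hsub hxc).1 (hsub hxc).2
  have haU : a ∉ U := by
    intro haU
    have h1 : Ico a b ⊆ U := by
      intro y hy
      rcases eq_or_lt_of_le hy.1 with h | h
      · exact h ▸ haU
      · exact hcU (hsup ⟨h, hy.2⟩)
    have h2 : Ico a b ⊆ c :=
      isPreconnected_Ico.subset_connectedComponentIn (Ioo_subset_Ico_self (hsub hxc)) h1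
    exact absurd (hceq ▸ h2 ⟨le_refl a, hab⟩).1 (lt_irrefl a)
  have hbU : b ∉ U := by
    intro hbU
    have h1 : Ioc a b ⊆ U := by
      intro y hy
      rcases eq_or_lt_of_le hy.2 with h | h
      · exact h ▸ hbU
      · exact hcU (hsup ⟨hy.1, h⟩)
    have h2 : Ioc a b ⊆ c :=
      isPreconnected_Ioc.subset_connectedComponentIn (Ioo_subset_Ioc_self (hsub hxc)) h1
    exact absurd (hceq ▸ h2 ⟨hab, le_refl b⟩).2 (lt_irrefl b)
  exact ⟨a, b, hab, hceq, haU, hbU,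
    closure_mono hcU (csInf_mem_closure hne hbb),
    closure_mono hcU (csSup_mem_closure hne hba)⟩
open MeasureTheory Real Set Filter Topology Bornology

lemma integral_deriv_compact_zero (K : Set ℝ) (hK : IsCompact K)
    (g g' : ℝ → ℝ) (hg : ∀ p, HasDerivAt g (g' p) p) (hg' : Continuous g')
    (h0 : ∀ p ∈ frontier K, g p = 0) :
    ∫ p in K, g' p = 0 := by
  have hKcl : IsClosed K := hK.isClosed
  have hint : IntegrableOn g' K := hg'.continuousOn.integrableOn_compact hK
  have hKeq : K = interior K ∪ frontier K := by
    rw [hKcl.frontier_eq, Set.union_diff_cancel interior_subset]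
  have hfrK : frontier K ⊆ K := by rw [hKcl.frontier_eq]; exact Set.diff_subset
  have hsplit : ∫ p in K, g' p = (∫ p in interior K, g' p) + ∫ p in frontier K, g' p := by
    conv_lhs => rw [hKeq]
    exact setIntegral_union (by rw [hKcl.frontier_eq]; exact Set.disjoint_sdiff_right)
      isClosed_frontier.measurableSet (hint.mono_set interior_subset) (hint.mono_set hfrK)
  have hfr0 : ∫ p in frontier K, g' p = 0 :=
    setIntegral_eq_zero_of_ae_eq_zero (ae_deriv_zero_on_closed isClosed_frontier hg h0)
  have hint0 : ∫ p in interior K, g' p = 0 := by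
    set U := interior K with hU
    have hUopen : IsOpen U := isOpen_interior
    have hUb : Bornology.IsBounded U := hK.isBounded.subset interior_subset
    set C : Set (Set ℝ) := (connectedComponentIn U) '' U with hC
    have hmemC : ∀ c ∈ C, ∀ z ∈ c, connectedComponentIn U z = c := by
      rintro c ⟨x, hx, rfl⟩ z hz
      exact (connectedComponentIn_eq hz).symm
    have hCopen : ∀ c ∈ C, IsOpen c := by
      rintro c ⟨x, hx, rfl⟩; exact hUopen.connectedComponentIn
    have hCne : ∀ c ∈ C, c.Nonempty := by
      rintro c ⟨x, hx, rfl⟩; exact ⟨x, mem_connectedComponentIn hx⟩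
    have hCdisj : C.PairwiseDisjoint id := by
      rintro c₁ hc₁ c₂ hc₂ hne
      rw [Function.onFun, Set.disjoint_left]
      intro z hz₁ hz₂
      exact hne ((hmemC c₁ hc₁ z hz₁).symm.trans (hmemC c₂ hc₂ z hz₂))
    have hCcount : C.Countable := hCdisj.countable_of_isOpen hCopen hCne
    have hUnion : ⋃ c : C, (c : Set ℝ) = U := by
      apply Set.Subset.antisymm
      · refine Set.iUnion_subset fun c => ?_
        rcases c.2 with ⟨x, hx, h⟩
        exact h ▸ connectedComponentIn_subset U x
      · intro x hx
        exact Set.mem_iUnion.2 ⟨⟨connectedComponentIn U x, ⟨x, hx, rfl⟩⟩,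
          mem_connectedComponentIn hx⟩
    have := hCcount.to_subtype
    have hintU : IntegrableOn g' (⋃ c : C, (c : Set ℝ)) := by
      rw [hUnion]; exact hint.mono_set interior_subset
    have hzero : ∀ c : C, ∫ p in (c : Set ℝ), g' p = 0 := by
      rintro ⟨c, x, hx, rfl⟩
      obtain ⟨a, b, hab, hIoo, haU, hbU, hacl, hbcl⟩ := component_eq_Ioo hUopen hUb hx
      have hafr : a ∈ frontier K := by
        rw [hKcl.frontier_eq]
        exact ⟨closure_minimal interior_subset hKcl hacl, haU⟩
      have hbfr : b ∈ frontier K := by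
        rw [hKcl.frontier_eq]
        exact ⟨closure_minimal interior_subset hKcl hbcl, hbU⟩
      show ∫ p in connectedComponentIn U x, g' p = 0
      rw [hIoo, ← MeasureTheory.integral_Ioc_eq_integral_Ioo,
        ← intervalIntegral.integral_of_le hab.le,
        intervalIntegral.integral_eq_sub_of_hasDerivAt (fun y _ => hg y)
          (hg'.intervalIntegrable a b), h0 a hafr, h0 b hbfr, sub_zero]
    calc ∫ p in U, g' p = ∫ p in ⋃ c : C, (c : Set ℝ), g' p := by rw [hUnion]
      _ = ∑' c : C, ∫ p in (c : Set ℝ), g' p :=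
          integral_iUnion (fun c => (hCopen c c.2).measurableSet)
            (fun c₁ c₂ hne => hCdisj c₁.2 c₂.2 (Subtype.coe_injective.ne hne)) hintU
      _ = ∑' _c : C, (0 : ℝ) := tsum_congr hzero
      _ = 0 := tsum_zero
  rw [hsplit, hfr0, hint0, add_zero]

/-- For a Hamiltonian `H(p,q,t)` on `D × S¹` with normalization
`H̃ = H + c` vanishing on `∂D × S¹`, twice the helicity integral
`ℋ(H) = ∫₀^{2π} ∫_D H̃ dp dq dt` equals the helicity `∫_{D×S¹} α ∧ dα` of the
Hamiltonian vector field `ξ = (−H_q, H_p, 1)`, where `α = p dq − H̃ dt` is the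
primitive of `i_ξ μ`, `μ = dp ∧ dq ∧ dt`.  In the coordinates `(p,q,t)` one has
`α ∧ dα = (H̃ − p ∂H/∂p) dp ∧ dq ∧ dt` (for the orientation fixed by `μ`), so the
claim reads as the integral identity below.  A point of `ℝ²` is `x = (p,q)`, and
`∂H/∂p` at `x` is `fderiv ℝ (fun y => H y t) x (1,0)`. -/
theorem helicity_eq_half_int_alpha_wedge_d_alpha
    (D : Set (ℝ × ℝ)) (hDcomp : IsCompact D)
    (H : ℝ × ℝ → ℝ → ℝ) (c : ℝ)
    (hsmooth : ContDiff ℝ (⊤ : ℕ∞) (Function.uncurry H))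
    (hbound : ∀ x ∈ frontier D, ∀ t : ℝ, H x t + c = 0) :
    2 * (∫ t in (0:ℝ)..(2 * π), ∫ x in D, (H x t + c)) =
      ∫ t in (0:ℝ)..(2 * π), ∫ x in D,
        ((H x t + c) - x.1 * fderiv ℝ (fun y => H y t) x (1, 0)) := by
  have hDcl : IsClosed D := hDcomp.isClosed
  have hDmeas : MeasurableSet D := hDcl.measurableSet
  have hHt : ∀ t : ℝ, ContDiff ℝ (⊤ : ℕ∞) (fun y => H y t) := fun t =>
    hsmooth.comp (contDiff_id.prodMk contDiff_const)
  have hcontD : ∀ t : ℝ, Continuous (fun x : ℝ × ℝ => fderiv ℝ (fun y => H y t) x (1, 0)) :=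
    fun t => ((hHt t).continuous_fderiv (by simp)).clm_apply continuous_const
  have hcontH : ∀ t : ℝ, Continuous (fun x : ℝ × ℝ => H x t + c) := fun t =>
    ((hHt t).continuous).add continuous_const
  have key2 : ∀ t : ℝ,
      ∫ x in D, ((H x t + c) + x.1 * fderiv ℝ (fun y => H y t) x (1, 0)) = 0 := by
    intro t
    set φ : ℝ × ℝ → ℝ := fun x => (H x t + c) + x.1 * fderiv ℝ (fun y => H y t) x (1, 0)
      with hφ
    have hφc : Continuous φ := (hcontH t).add (continuous_fst.mul (hcontD t))
    have hIntOn : IntegrableOn φ D := hφc.continuousOn.integrableOn_compact hDcomp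
    have hInd : Integrable (D.indicator φ) := (integrable_indicator_iff hDmeas).2 hIntOn
    have hd : Differentiable ℝ (fun y => H y t) := (hHt t).differentiable (by simp)
    have hDer : ∀ q p : ℝ, HasDerivAt (fun p => p * (H (p, q) t + c)) (φ (p, q)) p := by
      intro q p
      have h1 : HasDerivAt (fun p : ℝ => H (p, q) t)
          (fderiv ℝ (fun y => H y t) (p, q) (1, 0)) p := by
        have := ((hd (p, q)).hasFDerivAt).comp_hasDerivAt p
          ((hasDerivAt_id p).prodMk (hasDerivAt_const p q))
        simpa [Function.comp_def] using this
      have h2 := (hasDerivAt_id' p).mul (h1.add_const c)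
      simpa [hφ, Pi.mul_def] using h2
    have hslice : ∀ q : ℝ, ∫ p : ℝ, D.indicator φ (p, q) = 0 := by
      intro q
      set Kq : Set ℝ := (fun p : ℝ => (p, q)) ⁻¹' D with hKq
      have hcι : Continuous (fun p : ℝ => (p, q)) := continuous_id.prodMk continuous_const
      have hKqcl : IsClosed Kq := hDcl.preimage hcι
      have hKqcomp : IsCompact Kq :=
        (hDcomp.image continuous_fst).of_isClosed_subset hKqcl
          (fun p hp => ⟨(p, q), hp, rfl⟩)
      have hfrsub : ∀ p ∈ frontier Kq, (p, q) ∈ frontier D := by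
        intro p hp
        rw [hKqcl.frontier_eq] at hp
        rw [hDcl.frontier_eq]
        refine ⟨hp.1, fun hin => hp.2 ?_⟩
        exact interior_maximal (Set.preimage_mono interior_subset)
          (isOpen_interior.preimage hcι) hin
      have h0q : ∀ p ∈ frontier Kq, p * (H (p, q) t + c) = 0 := fun p hp => by
        rw [hbound (p, q) (hfrsub p hp) t, mul_zero]
      have hg'c : Continuous fun p : ℝ => φ (p, q) := hφc.comp hcι
      have hkey := integral_deriv_compact_zero Kq hKqcomp _ _ (hDer q) hg'c h0q
      have hind : (fun p : ℝ => D.indicator φ (p, q)) =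
          Kq.indicator (fun p => φ (p, q)) := by
        funext p
        by_cases h : (p, q) ∈ D
        · rw [Set.indicator_of_mem h, Set.indicator_of_mem (show p ∈ Kq from h)]
        · rw [Set.indicator_of_notMem h, Set.indicator_of_notMem (show p ∉ Kq from h)]
      rw [hind, MeasureTheory.integral_indicator hKqcl.measurableSet]
      exact hkey
    calc ∫ x in D, φ x = ∫ x, D.indicator φ x := (MeasureTheory.integral_indicator hDmeas).symm
      _ = ∫ q : ℝ, ∫ p : ℝ, D.indicator φ (p, q) := by
          rw [Measure.volume_eq_prod] at hInd ⊢
          exact integral_prod_symm _ hInd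
      _ = 0 := by simp [hslice]
  have hint1 : ∀ t : ℝ, IntegrableOn (fun x : ℝ × ℝ => H x t + c) D := fun t =>
    (hcontH t).continuousOn.integrableOn_compact hDcomp
  have hint2 : ∀ t : ℝ,
      IntegrableOn (fun x : ℝ × ℝ => x.1 * fderiv ℝ (fun y => H y t) x (1, 0)) D :=
    fun t => (continuous_fst.mul (hcontD t)).continuousOn.integrableOn_compact hDcomp
  have hMain : ∀ t : ℝ,
      (∫ x in D, ((H x t + c) - x.1 * fderiv ℝ (fun y => H y t) x (1, 0)))
        = 2 * ∫ x in D, (H x t + c) := by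
    intro t
    have h0 := key2 t
    rw [integral_add (hint1 t) (hint2 t)] at h0
    rw [integral_sub (hint1 t) (hint2 t)]
    linarith
  calc 2 * (∫ t in (0:ℝ)..(2 * π), ∫ x in D, (H x t + c))
      = ∫ t in (0:ℝ)..(2 * π), 2 * ∫ x in D, (H x t + c) := by
        rw [intervalIntegral.integral_const_mul]
    _ = ∫ t in (0:ℝ)..(2 * π), ∫ x in D,
          ((H x t + c) - x.1 * fderiv ℝ (fun y => H y t) x (1, 0)) :=
        intervalIntegral.integral_congr fun t _ => (hMain t).symm
end

section
/- Under the time reparametrization t = τ − (1/2)sin 2(τ − π), the Hamiltonian H₂(I,φ,τ) = (1 − cos 2(τ − π))·H̃₂(I,φ, t(τ)) generates the same flow trajectories as H̃₂ and satisfies ℋ(H₂) = ℋ(H̃₂); moreover H₂ is C¹ in τ as a 2π-periodic function even when H̃₂ is discontinuous at τ = 0 and τ = π. -/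
open MeasureTheory Real intervalIntegral

noncomputable section

/-- The Hamiltonian vector field `(−∂H/∂q, ∂H/∂p)` with coordinates `x = (p,q)`. -/
def hamVF (H : ℝ × ℝ → ℝ → ℝ) (x : ℝ × ℝ) (t : ℝ) : ℝ × ℝ :=
  (-(fderiv ℝ (fun y => H y t) x (0, 1)), fderiv ℝ (fun y => H y t) x (1, 0))

/-- The time reparametrization `t(τ) = τ − (1/2) sin 2(τ − π)`. -/
def trep (τ : ℝ) : ℝ := τ - (1 / 2) * Real.sin (2 * (τ - π))

/-!
The weight `w τ = 1 - cos 2(τ - π) = 2 sin² τ` is `dt/dτ`; it vanishes to second order exactly on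
`πℤ`, the preimage under the increasing map `t` of the switching times `πℤ`. Off `πℤ`, `H₂` has
`τ`-derivative `w' · H̃₂ ∘ t + w² · ∂ₜH̃₂ ∘ t`. Since `w, w'` vanish on `πℤ` and `H̃₂, ∂ₜH̃₂` are
bounded, `H₂` and this derivative are continuous across `πℤ` (with value `0`), and a continuous
function whose derivative off a discrete set extends continuously is `C¹`. Helicity is preserved by
the substitution `t = t(τ)`, and trajectories by the chain rule, because the Hamiltonian vector
field of `w · H` is `w` times that of `H`.
-/

open Filter Set Topology

section Extension

variable {E : Type*} [NormedAddCommGroup E] [NormedSpace ℝ E]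

-- A local form of `hasDerivAt_of_hasDerivAt_of_ne`, which wants the derivative on all of `{x}ᶜ`.
theorem hasDerivAt_of_eventually_hasDerivAt {f g : ℝ → E} {x : ℝ}
    (hd : ∀ᶠ y in 𝓝[≠] x, HasDerivAt f (g y) y) (hf : ContinuousAt f x)
    (hg : ContinuousAt g x) : HasDerivAt f (g x) x := by
  obtain ⟨s, hs, hsd⟩ := (hd.filter_mono (nhdsWithin_mono x fun y hy => ne_of_gt hy)).exists_mem
  obtain ⟨t, ht, htd⟩ := (hd.filter_mono (nhdsWithin_mono x fun y hy => ne_of_lt hy)).exists_mem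
  have hright : HasDerivWithinAt f (g x) (Ici x) x :=
    hasDerivWithinAt_Ici_of_tendsto_deriv
      (fun y hy => (hsd y hy).differentiableAt.differentiableWithinAt) hf.continuousWithinAt hs
      ((hg.tendsto.mono_left nhdsWithin_le_nhds).congr'
        (eventually_of_mem hs fun y hy => (hsd y hy).deriv.symm))
  have hleft : HasDerivWithinAt f (g x) (Iic x) x :=
    hasDerivWithinAt_Iic_of_tendsto_deriv
      (fun y hy => (htd y hy).differentiableAt.differentiableWithinAt) hf.continuousWithinAt ht
      ((hg.tendsto.mono_left nhdsWithin_le_nhds).congr'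
        (eventually_of_mem ht fun y hy => (htd y hy).deriv.symm))
  simpa using hleft.union hright

theorem contDiff_one_of_hasDerivAt_of_notMem {F F' : ℝ → E} {Z : Set ℝ}
    (hZ : ∀ z ∈ Z, ∀ᶠ y in 𝓝[≠] z, y ∉ Z) (hF : Continuous F) (hF' : Continuous F')
    (hd : ∀ y ∉ Z, HasDerivAt F (F' y) y) : ContDiff ℝ 1 F := by
  have hderiv : ∀ y, HasDerivAt F (F' y) y := fun y => by
    by_cases hy : y ∈ Z
    · exact hasDerivAt_of_eventually_hasDerivAt ((hZ y hy).mono hd) hF.continuousAt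
        hF'.continuousAt
    · exact hd y hy
  rw [contDiff_one_iff_deriv]
  exact ⟨fun y => (hderiv y).differentiableAt, by rwa [funext fun y => (hderiv y).deriv]⟩

end Extension

theorem Continuous.mul_of_eq_zero_of_bounded {X : Type*} [TopologicalSpace X] {w u : X → ℝ}
    {Z : Set X} {C : ℝ} (hw : Continuous w) (hwZ : ∀ z ∈ Z, w z = 0)
    (hu : ∀ y ∉ Z, ContinuousAt u y) (huC : ∀ y, |u y| ≤ C) :
    Continuous fun y => w y * u y := by
  refine continuous_iff_continuousAt.2 fun y => ?_
  by_cases hy : y ∈ Z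
  · have hw0 : Tendsto w (𝓝 y) (𝓝 0) := hwZ y hy ▸ hw.continuousAt
    simpa [ContinuousAt, hwZ y hy] using
      hw0.zero_mul_isBoundedUnder_le (isBoundedUnder_of ⟨C, fun y => huC y⟩)
  · exact hw.continuousAt.mul (hu y hy)

theorem eventually_sin_ne_zero {z : ℝ} (hz : sin z = 0) : ∀ᶠ y in 𝓝[≠] z, sin y ≠ 0 := by
  have hcos : cos z ≠ 0 := fun h => by simpa [hz, h] using sin_sq_add_cos_sq z
  simpa [hz] using (hasDerivAt_sin z).eventually_ne hcos (c := sin z)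

theorem exists_sub_int_mul_two_pi_mem_of_sin_ne_zero {t : ℝ} (ht : sin t ≠ 0) :
    ∃ k : ℤ, t - k * (2 * π) ∈ Ioo 0 π ∪ Ioo π (2 * π) := by
  refine ⟨⌊t / (2 * π)⌋, ?_⟩
  have h0 := Int.sub_floor_div_mul_nonneg t two_pi_pos
  have h2π := Int.sub_floor_div_mul_lt t two_pi_pos
  have hsin : sin (t - ⌊t / (2 * π)⌋ * (2 * π)) ≠ 0 := by rwa [sin_sub_int_mul_two_pi]
  have hne0 : t - ⌊t / (2 * π)⌋ * (2 * π) ≠ 0 := fun h => hsin (by rw [h, sin_zero])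
  have hneπ : t - ⌊t / (2 * π)⌋ * (2 * π) ≠ π := fun h => hsin (by rw [h, sin_pi])
  rcases hneπ.lt_or_gt with h | h
  · exact Or.inl ⟨h0.lt_of_ne' hne0, h⟩
  · exact Or.inr ⟨h, h2π⟩

namespace Function.Periodic

variable {f : ℝ → ℝ} {c : ℝ}

theorem contDiffAt_add {n : WithTop ℕ∞} {x : ℝ} (hf : Periodic f c)
    (h : ContDiffAt ℝ n f x) : ContDiffAt ℝ n f (x + c) := by
  have : ContDiffAt ℝ n (fun y => f (y - c)) (x + c) :=
    ContDiffAt.comp (x + c) (by simpa using h) (contDiffAt_id.sub contDiffAt_const)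
  simpa [hf.sub_eq] using this

protected theorem deriv (hf : Periodic f c) : Periodic (deriv f) c := fun x => by
  simpa [hf.sub_eq] using deriv_comp_sub_const (f := f) (a := c) (x := x + c)

theorem contDiffAt_of_sin_ne_zero {n : WithTop ℕ∞} (hf : Periodic f (2 * π))
    (h₁ : ContDiffOn ℝ n f (Ioo 0 π)) (h₂ : ContDiffOn ℝ n f (Ioo π (2 * π))) {t : ℝ}
    (ht : sin t ≠ 0) : ContDiffAt ℝ n f t := by
  obtain ⟨k, hk⟩ := exists_sub_int_mul_two_pi_mem_of_sin_ne_zero ht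
  have : ContDiffAt ℝ n f (t - k * (2 * π)) :=
    hk.elim (fun h => h₁.contDiffAt (isOpen_Ioo.mem_nhds h))
      (fun h => h₂.contDiffAt (isOpen_Ioo.mem_nhds h))
  simpa using (hf.int_mul k).contDiffAt_add this

theorem abs_deriv_le_of_sin_ne_zero (hf : Periodic f (2 * π)) {M : ℝ}
    (hM : ∀ t ∈ Ioo 0 π ∪ Ioo π (2 * π), |derivWithin f (Ioo 0 π ∪ Ioo π (2 * π)) t| ≤ M)
    {t : ℝ} (ht : sin t ≠ 0) : |deriv f t| ≤ M := by
  obtain ⟨k, hk⟩ := exists_sub_int_mul_two_pi_mem_of_sin_ne_zero ht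
  rw [← hf.deriv.sub_int_mul_eq k, ← derivWithin_of_isOpen (isOpen_Ioo.union isOpen_Ioo) hk]
  exact hM _ hk

end Function.Periodic

theorem sin_sub_sin_lt_sub {a b : ℝ} (hab : a < b) : sin b - sin a < b - a :=
  calc sin b - sin a = 2 * sin ((b - a) / 2) * cos ((b + a) / 2) := sin_sub_sin b a
    _ ≤ 2 * |sin ((b - a) / 2)| := by
      rw [mul_assoc]
      gcongr
      calc _ ≤ |sin ((b - a) / 2) * cos ((b + a) / 2)| := le_abs_self _
        _ ≤ |sin ((b - a) / 2)| := by
          rw [abs_mul]; exact mul_le_of_le_one_right (abs_nonneg _) (abs_cos_le_one _)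
    _ < 2 * |(b - a) / 2| := by gcongr; exact abs_sin_lt_abs (by linarith)
    _ = b - a := by rw [abs_of_pos (by linarith)]; ring

theorem hasDerivAt_trep (τ : ℝ) : HasDerivAt trep (1 - cos (2 * (τ - π))) τ :=
  ((hasDerivAt_id' τ).sub ((((hasDerivAt_id' τ).sub_const π).const_mul 2).sin.const_mul
    (1 / 2))).congr_deriv (by ring)

theorem continuous_trep : Continuous trep :=
  continuous_iff_continuousAt.2 fun τ => (hasDerivAt_trep τ).continuousAt

theorem trep_strictMono : StrictMono trep := fun a b hab => by
  have := sin_sub_sin_lt_sub (show 2 * (a - π) < 2 * (b - π) by linarith)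
  unfold trep
  linarith

theorem trep_int_mul_pi (k : ℤ) : trep (k * π) = k * π := by
  rw [trep, show 2 * ((k : ℝ) * π - π) = (2 * k - 2 : ℤ) * π by push_cast; ring,
    sin_int_mul_pi, mul_zero, sub_zero]

theorem sin_trep_eq_zero_iff {τ : ℝ} : sin (trep τ) = 0 ↔ sin τ = 0 := by
  simp only [sin_eq_zero_iff]
  constructor
  · rintro ⟨k, hk⟩
    exact ⟨k, trep_strictMono.injective (by rw [trep_int_mul_pi, hk])⟩
  · rintro ⟨k, rfl⟩
    exact ⟨k, (trep_int_mul_pi k).symm⟩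

theorem one_sub_cos_two_mul_sub_pi (τ : ℝ) : 1 - cos (2 * (τ - π)) = 2 * sin τ ^ 2 := by
  rw [show 2 * (τ - π) = 2 * τ - 2 * π by ring, cos_sub_two_pi, cos_two_mul, cos_sq']
  ring

theorem sin_two_mul_sub_pi (τ : ℝ) : sin (2 * (τ - π)) = 2 * sin τ * cos τ := by
  rw [show 2 * (τ - π) = 2 * τ - 2 * π by ring, sin_sub_two_pi, sin_two_mul]

theorem hasDerivAt_one_sub_cos (τ : ℝ) :
    HasDerivAt (fun τ => 1 - cos (2 * (τ - π))) (2 * sin (2 * (τ - π))) τ :=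
  ((((hasDerivAt_id' τ).sub_const π).const_mul 2).cos.const_sub 1).congr_deriv (by ring)

theorem contDiff_one_sub_cos_mul_comp_trep {f : ℝ → ℝ} {M : ℝ}
    (hf : ∀ t, sin t ≠ 0 → ContDiffAt ℝ 1 f t) (hfM : ∀ t, |f t| ≤ M)
    (hf'M : ∀ t, sin t ≠ 0 → |deriv f t| ≤ M) :
    ContDiff ℝ 1 fun τ => (1 - cos (2 * (τ - π))) * f (trep τ) := by
  set w : ℝ → ℝ := fun τ => 1 - cos (2 * (τ - π))
  set w' : ℝ → ℝ := fun τ => 2 * sin (2 * (τ - π))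
  have hw : Continuous w := by fun_prop
  have hw' : Continuous w' := by fun_prop
  have hwZ : ∀ τ ∈ {τ | sin τ = 0}, w τ = 0 := fun τ hτ => by
    simp [w, one_sub_cos_two_mul_sub_pi, hτ.out]
  have hw'Z : ∀ τ ∈ {τ | sin τ = 0}, w' τ = 0 := fun τ hτ => by
    simp [w', sin_two_mul_sub_pi, hτ.out]
  have hfτ : ∀ τ ∉ {τ | sin τ = 0}, ContDiffAt ℝ 1 f (trep τ) := fun τ hτ =>
    hf _ (sin_trep_eq_zero_iff.not.2 hτ)
  have hw'f'M : ∀ τ, |w τ * deriv f (trep τ)| ≤ 2 * M := fun τ => by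
    by_cases hτ : sin τ = 0
    · simpa [hwZ τ hτ] using (abs_nonneg _).trans (hfM 0)
    · rw [abs_mul]
      refine mul_le_mul ?_ (hf'M _ (sin_trep_eq_zero_iff.not.2 hτ)) (abs_nonneg _) zero_le_two
      rw [abs_le]; constructor <;> linarith [cos_le_one (2 * (τ - π)), neg_one_le_cos (2 * (τ - π))]
  apply contDiff_one_of_hasDerivAt_of_notMem (Z := {τ | sin τ = 0})
    (F' := fun τ => w' τ * f (trep τ) + w τ * (w τ * deriv f (trep τ)))
    (fun z hz => eventually_sin_ne_zero hz)
  · exact hw.mul_of_eq_zero_of_bounded hwZ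
      (fun τ hτ => (hfτ τ hτ).continuousAt.comp continuous_trep.continuousAt) (fun τ => hfM _)
  · refine (hw'.mul_of_eq_zero_of_bounded hw'Z
      (fun τ hτ => (hfτ τ hτ).continuousAt.comp continuous_trep.continuousAt) (fun τ => hfM _)).add
      (hw.mul_of_eq_zero_of_bounded hwZ (fun τ hτ => hw.continuousAt.mul ?_) hw'f'M)
    exact ((hfτ τ hτ).derivWithin (m := 0) le_rfl).continuousAt.comp continuous_trep.continuousAt
  · intro τ hτ
    exact ((hasDerivAt_one_sub_cos τ).mul
      (((hfτ τ hτ).differentiableAt one_ne_zero).hasDerivAt.comp τ (hasDerivAt_trep τ))).congr_deriv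
      (by simp only [w, w', Function.comp_apply]; ring)

theorem integral_one_sub_cos_smul_comp_trep {E : Type*} [NormedAddCommGroup E]
    [NormedSpace ℝ E] (g : ℝ → E) :
    ∫ τ in (0 : ℝ)..2 * π, (1 - cos (2 * (τ - π))) • g (trep τ) = ∫ t in (0 : ℝ)..2 * π, g t := by
  have h := integral_Icc_deriv_smul_of_deriv_nonneg (g := g) continuous_trep.continuousOn
    (fun τ _ => hasDerivAt_trep τ) (fun τ _ => sub_nonneg.2 (cos_le_one _)) two_pi_pos.le
  rw [show trep 0 = 0 by simpa using trep_int_mul_pi 0,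
    show trep (2 * π) = 2 * π by simpa using trep_int_mul_pi 2] at h
  rw [integral_of_le two_pi_pos.le, integral_of_le two_pi_pos.le, ← integral_Icc_eq_integral_Ioc,
    ← integral_Icc_eq_integral_Ioc, h]

theorem hamVF_mul_comp (H : ℝ × ℝ → ℝ → ℝ) (a φ : ℝ → ℝ) (x : ℝ × ℝ) (τ : ℝ) :
    hamVF (fun y σ => a σ * H y (φ σ)) x τ = a τ • hamVF H x (φ τ) := by
  have h : fderiv ℝ (fun y => a τ * H y (φ τ)) x = a τ • fderiv ℝ (fun y => H y (φ τ)) x :=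
    congrFun (fderiv_const_smul_field (a τ) (f := fun y => H y (φ τ))) x
  simp [hamVF, h]

theorem HasDerivAt.comp_hamVF {H : ℝ × ℝ → ℝ → ℝ} {γ : ℝ → ℝ × ℝ} {φ φ' : ℝ → ℝ} {τ : ℝ}
    (hγ : HasDerivAt γ (hamVF H (γ (φ τ)) (φ τ)) (φ τ)) (hφ : HasDerivAt φ (φ' τ) τ) :
    HasDerivAt (γ ∘ φ) (hamVF (fun y σ => φ' σ * H y (φ σ)) (γ (φ τ)) τ) τ := by
  rw [hamVF_mul_comp]
  exact hγ.scomp τ hφ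

theorem smoothing_reparametrization_general
    (D : Set (ℝ × ℝ))
    (Ht H₂ : ℝ × ℝ → ℝ → ℝ)
    -- `H̃₂` is `2π`-periodic in time:
    (hper : ∀ x t, Ht x (t + 2 * π) = Ht x t)
    -- `H̃₂` is smooth away from the switching times `t = 0` and `t = π`:
    (hsm : ∀ x, ContDiffOn ℝ 1 (Ht x) (Set.Ioo 0 π) ∧
      ContDiffOn ℝ 1 (Ht x) (Set.Ioo π (2 * π)))
    -- with bounded values and bounded time-derivative on the smooth pieces:
    (hbd : ∃ M : ℝ, ∀ x ∈ D, (∀ t, |Ht x t| ≤ M) ∧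
      ∀ t ∈ Set.Ioo (0:ℝ) π ∪ Set.Ioo π (2 * π),
        |derivWithin (Ht x) (Set.Ioo (0:ℝ) π ∪ Set.Ioo π (2 * π)) t| ≤ M)
    -- `H₂` is the reparametrized Hamiltonian
    -- `H₂(x,τ) = (1 − cos 2(τ − π)) · H̃₂(x, t(τ))`:
    (hdef : ∀ x τ, H₂ x τ = (1 - Real.cos (2 * (τ - π))) * Ht x (trep τ)) :
    -- `H₂` is `C¹` in `τ`:
    (∀ x ∈ D, ContDiff ℝ 1 (H₂ x)) ∧
    -- the helicity is unchanged: `ℋ(H₂) = ℋ(H̃₂)`: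
    ((∫ τ in (0:ℝ)..(2 * π), ∫ x in D, H₂ x τ) =
      ∫ t in (0:ℝ)..(2 * π), ∫ x in D, Ht x t) ∧
    -- `H₂` generates the same flow trajectories: if `g` solves Hamilton's
    -- equations for `H̃₂`, then `τ ↦ g (t(τ)) x` solves them for `H₂`:
    (∀ g : ℝ → ℝ × ℝ → ℝ × ℝ, ∀ x : ℝ × ℝ,
      (∀ t ∈ Set.Ioo (0:ℝ) π ∪ Set.Ioo π (2 * π),
        HasDerivAt (fun s => g s x) (hamVF Ht (g t x) t) t) →
      ∀ τ, trep τ ∈ Set.Ioo (0:ℝ) π ∪ Set.Ioo π (2 * π) →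
        HasDerivAt (fun σ => g (trep σ) x) (hamVF H₂ (g (trep τ) x) τ) τ) := by
  obtain rfl : H₂ = fun x τ => (1 - cos (2 * (τ - π))) * Ht x (trep τ) := funext₂ hdef
  obtain ⟨M, hM⟩ := hbd
  refine ⟨fun x hx => ?_, ?_, fun g x hg τ hτ => (hg _ hτ).comp_hamVF (hasDerivAt_trep τ)⟩
  · have hper : Function.Periodic (Ht x) (2 * π) := hper x
    exact contDiff_one_sub_cos_mul_comp_trep
      (fun t ht => hper.contDiffAt_of_sin_ne_zero (hsm x).1 (hsm x).2 ht) (hM x hx).1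
      (fun t ht => hper.abs_deriv_le_of_sin_ne_zero (hM x hx).2 ht)
  · simp_rw [MeasureTheory.integral_const_mul]
    simpa only [smul_eq_mul] using integral_one_sub_cos_smul_comp_trep fun t => ∫ x in D, Ht x t

/-- Under the time reparametrization
`t = τ − (1/2) sin 2(τ − π)`, the Hamiltonian
`H₂(x, τ) = (1 − cos 2(τ − π)) · H̃₂(x, t(τ))` generates the same flow
trajectories as `H̃₂` and has the same helicity; moreover `H₂` is `C¹` in `τ`
(as a `2π`-periodic function) even though `H̃₂` may be discontinuous in time at
`τ = 0` and `τ = π`. -/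
theorem smoothing_reparametrization
    (D : Set (ℝ × ℝ)) (hDcomp : IsCompact D)
    (Ht H₂ : ℝ × ℝ → ℝ → ℝ)
    -- `H̃₂` is `2π`-periodic in time:
    (hper : ∀ x t, Ht x (t + 2 * π) = Ht x t)
    -- `H̃₂` is smooth away from the switching times `t = 0` and `t = π`:
    (hsm : ∀ x, ContDiffOn ℝ 1 (Ht x) (Set.Ioo 0 π) ∧
      ContDiffOn ℝ 1 (Ht x) (Set.Ioo π (2 * π)))
    -- with bounded values and bounded time-derivative on the smooth pieces:
    (hbd : ∃ M : ℝ, ∀ x ∈ D, (∀ t, |Ht x t| ≤ M) ∧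
      ∀ t ∈ Set.Ioo (0:ℝ) π ∪ Set.Ioo π (2 * π),
        |derivWithin (Ht x) (Set.Ioo (0:ℝ) π ∪ Set.Ioo π (2 * π)) t| ≤ M)
    -- `H₂` is the reparametrized Hamiltonian
    -- `H₂(x,τ) = (1 − cos 2(τ − π)) · H̃₂(x, t(τ))`:
    (hdef : ∀ x τ, H₂ x τ = (1 - Real.cos (2 * (τ - π))) * Ht x (trep τ)) :
    -- `H₂` is `C¹` in `τ`:
    (∀ x ∈ D, ContDiff ℝ 1 (H₂ x)) ∧
    -- the helicity is unchanged: `ℋ(H₂) = ℋ(H̃₂)`: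
    ((∫ τ in (0:ℝ)..(2 * π), ∫ x in D, H₂ x τ) =
      ∫ t in (0:ℝ)..(2 * π), ∫ x in D, Ht x t) ∧
    -- `H₂` generates the same flow trajectories: if `g` solves Hamilton's
    -- equations for `H̃₂`, then `τ ↦ g (t(τ)) x` solves them for `H₂`:
    (∀ g : ℝ → ℝ × ℝ → ℝ × ℝ, ∀ x : ℝ × ℝ,
      (∀ t ∈ Set.Ioo (0:ℝ) π ∪ Set.Ioo π (2 * π),
        HasDerivAt (fun s => g s x) (hamVF Ht (g t x) t) t) →
      ∀ τ, trep τ ∈ Set.Ioo (0:ℝ) π ∪ Set.Ioo π (2 * π) →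
        HasDerivAt (fun σ => g (trep σ) x) (hamVF H₂ (g (trep τ) x) τ) τ) :=
  smoothing_reparametrization_general D Ht H₂ hper hsm hbd hdef

end
end
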